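/- arXiv:2507.01650 — 3 statements merged into one kernel-verified Lean document; each statement's English description precedes it below -/
import Mathlib

section
/- If (V, l_≻, r_≻, l_≺, r_≺) is a representation of an anti-dendriform algebra (A, ≻, ≺), then (V, -l_≻, -r_≺) is a representation (bimodule) of the associated associative algebra (A, ·), where x·y = x≻y + x≺y. -/
open TensorProduct

set_option synthInstance.maxHeartbeats 1000000
set_option maxHeartbeats 1600000

variable {K : Type*} [Field K]

/-- The anti-dendriform algebra identities for two bilinear operations `s` (≻) and `p` (≺):
`x≻(y≻z) = -(x·y)≻z = -x≺(y·z) = (x≺y)≺z` and `(x≻y)≺z = x≻(y≺z)`, where `x·y = x≻y + x≺y`. -/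
def IsAntiDend {M : Type*} [AddCommGroup M] [Module K M]
    (s p : M →ₗ[K] M →ₗ[K] M) : Prop :=
  ∀ x y z : M,
    s x (s y z) = - s (s x y + p x y) z ∧
    s x (s y z) = - p x (s y z + p y z) ∧
    s x (s y z) = p (p x y) z ∧
    p (s x y) z = s x (p y z)

/-- A representation of an anti-dendriform algebra `(M, s, p)` on `V`. -/
def IsAdRep {A V : Type*} [AddCommGroup A] [Module K A] [AddCommGroup V] [Module K V]
    (s p : A →ₗ[K] A →ₗ[K] A)
    (lS rS lP rP : A →ₗ[K] Module.End K V) : Prop :=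
  ∀ x y : A,
    lS x * lS y = - lS (s x y + p x y) ∧
    lS x * lS y = - (lP x * (lS y + lP y)) ∧
    lS x * lS y = lP (p x y) ∧
    rS (s x y) = - (rS y * (rS x + rP x)) ∧
    rS (s x y) = - rP (s x y + p x y) ∧
    rS (s x y) = rP y * rP x ∧
    lS x * rS y = - (rS y * (lS x + lP x)) ∧
    lS x * rS y = - (lP x * (rS y + rP y)) ∧
    lS x * rS y = rP y * lP x ∧
    lP (s x y) = lS x * lP y ∧
    rP y * rS x = rS (p x y) ∧
    rP y * lS x = lS x * rP y

/-- A bimodule of the (not necessarily unital) associative algebra `(A, mul)`. -/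
def IsAssocRep {A V : Type*} [AddCommGroup A] [Module K A] [AddCommGroup V] [Module K V]
    (mul : A →ₗ[K] A →ₗ[K] A)
    (l r : A →ₗ[K] Module.End K V) : Prop :=
  ∀ x y : A,
    l (mul x y) = l x * l y ∧
    r (mul x y) = r y * r x ∧
    l x * r y = r y * l x

variable {A V : Type*} [AddCommGroup A] [Module K A] [AddCommGroup V] [Module K V]

/-- if `(V, l_≻, r_≻, l_≺, r_≺)` is a representation of the anti-dendriform
algebra `(A, ≻, ≺)`, then `(V, -l_≻, -r_≺)` is a bimodule of `(A, ·)`. -/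
theorem stmt1 (s p : A →ₗ[K] A →ₗ[K] A) (h : IsAntiDend s p)
    (lS rS lP rP : A →ₗ[K] Module.End K V)
    (hrep : IsAdRep s p lS rS lP rP) :
    IsAssocRep (s + p) (-lS) (-rP) := by
  intro x y
  obtain ⟨h1, _, _, _, h5, h6, _, _, _, _, _, h12⟩ := hrep x y
  refine ⟨?_, ?_, ?_⟩
  · simp only [LinearMap.neg_apply, LinearMap.add_apply, neg_mul_neg, h1, neg_neg]
  · have : rP (s x y + p x y) = - (rP y * rP x) := by rw [← h6, ← neg_eq_iff_eq_neg, ← h5]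
    simp only [LinearMap.neg_apply, LinearMap.add_apply, neg_mul_neg, this, neg_neg]
  · simp only [LinearMap.neg_apply, neg_mul_neg, h12]
end

section
/- If (V, l_≻, r_≻, l_≺, r_≺) is a representation of an anti-dendriform algebra (A, ≻, ≺), then (V, l_≻ + l_≺, r_≻ + r_≺) is a representation of the associated associative algebra (A, ·). -/
open TensorProduct

set_option synthInstance.maxHeartbeats 1000000
set_option maxHeartbeats 1600000

variable {K : Type*} [Field K]

variable {A V : Type*} [AddCommGroup A] [Module K A] [AddCommGroup V] [Module K V]

/-- if `(V, l_≻, r_≻, l_≺, r_≺)` is a representation of the anti-dendriform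
algebra `(A, ≻, ≺)`, then `(V, l_≻ + l_≺, r_≻ + r_≺)` is a bimodule of `(A, ·)`. -/
theorem stmt2 (s p : A →ₗ[K] A →ₗ[K] A) (h : IsAntiDend s p)
    (lS rS lP rP : A →ₗ[K] Module.End K V)
    (hrep : IsAdRep s p lS rS lP rP) :
    IsAssocRep (s + p) (lS + lP) (rS + rP) := by
  intro x y
  obtain ⟨h1, h2, h3, h4, h5, h6, h7, h8, h9, h10, h11, h12⟩ := hrep x y
  simp only [LinearMap.add_apply]
  refine ⟨?_, ?_, ?_⟩
  · have e1 : lS (s x y + p x y) = -(lS x * lS y) := by rw [h1, neg_neg]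
    have e2 : lP x * (lS y + lP y) = -(lS x * lS y) := by rw [h2, neg_neg]
    rw [map_add lP, e1, h10, ← h3, add_mul, e2, mul_add]
    abel
  · have e1 : rS y * (rS x + rP x) = -(rS (s x y)) := by rw [h4, neg_neg]
    have e2 : rP (s x y + p x y) = -(rS (s x y)) := by rw [h5, neg_neg]
    rw [map_add rS, e2, add_mul, e1, mul_add, h11, ← h6]
    abel
  · have e1 : lP x * (rS y + rP y) = -(lS x * rS y) := by rw [h8, neg_neg]
    have e2 : rS y * (lS x + lP x) = -(lS x * rS y) := by rw [h7, neg_neg]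
    rw [add_mul, e1, mul_add, add_mul, e2, mul_add, h12, ← h9]
    abel
end

section
/- If (V, l_≻, r_≻, l_≺, r_≺) is a representation of an anti-dendriform algebra (A, ≻, ≺), then (V*, -(r_≺* + r_≻*), l_≺*, r_≻*, -(l_≺* + l_≻*)) is also a representation of (A, ≻, ≺), where for f : A → End(V), f* : A → End(V*) is defined by ⟨f*(x)u*, v⟩ = ⟨u*, f(x)v⟩. -/
/-! Transposition reverses products, so each identity of the dual representation is the transpose
of an identity in `Module.End K V` with the factors reversed. Those reversed identities are
rearrangements of the axioms, given the product rules
`(r_≺ y + r_≻ y)(r_≺ x + r_≻ x) = r_≻ (x ≺ y)` and `(l_≺ x + l_≻ x)(l_≺ y + l_≻ y) = l_≺ (x ≻ y)`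
and the commutation of `r_≺ + r_≻` with `l_≺ + l_≻`. -/

open TensorProduct

set_option synthInstance.maxHeartbeats 1000000
set_option maxHeartbeats 1600000

variable {K : Type*} [Field K]

variable {A V : Type*} [AddCommGroup A] [Module K A] [AddCommGroup V] [Module K V]

/-- `f ↦ f*`, sending `x` to the transpose of `f x`. -/
noncomputable def starRep (f : A →ₗ[K] Module.End K V) :
    A →ₗ[K] Module.End K (Module.Dual K V) :=
  (Module.Dual.transpose :
      (V →ₗ[K] V) →ₗ[K] (Module.Dual K V →ₗ[K] Module.Dual K V)) ∘ₗ f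

theorem starRep_apply (f : A →ₗ[K] Module.End K V) (x : A) :
    starRep f x = Module.Dual.transpose (f x) :=
  rfl

theorem Module.Dual.transpose_mul_transpose (f g : Module.End K V) :
    Module.Dual.transpose (R := K) f * Module.Dual.transpose g = Module.Dual.transpose (g * f) :=
  (Module.Dual.transpose_comp g f).symm

namespace IsAdRep

variable {s p : A →ₗ[K] A →ₗ[K] A} {lS rS lP rP : A →ₗ[K] Module.End K V}

theorem rP_add_rS_mul_rP_add_rS (hrep : IsAdRep s p lS rS lP rP) (x y : A) :
    (rP y + rS y) * (rP x + rS x) = rS (p x y) := by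
  obtain ⟨-, -, -, h4, -, h6, -, -, -, -, h11, -⟩ := hrep x y
  calc (rP y + rS y) * (rP x + rS x) = rP y * rP x + rP y * rS x + rS y * (rS x + rP x) := by
        noncomm_ring
    _ = rS (s x y) + rS (p x y) - rS (s x y) := by
        rw [← h6, h11, ← neg_eq_iff_eq_neg.mpr h4, sub_eq_add_neg]
    _ = rS (p x y) := by abel

theorem lP_add_lS_mul_lP_add_lS (hrep : IsAdRep s p lS rS lP rP) (x y : A) :
    (lP x + lS x) * (lP y + lS y) = lP (s x y) := by
  obtain ⟨-, h2, -, -, -, -, -, -, -, h10, -, -⟩ := hrep x y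
  calc (lP x + lS x) * (lP y + lS y) = lP x * (lS y + lP y) + lS x * lS y + lS x * lP y := by
        noncomm_ring
    _ = lP (s x y) := by rw [← neg_eq_iff_eq_neg.mpr h2, h10]; abel

theorem lP_mul_rP_add_rS (hrep : IsAdRep s p lS rS lP rP) (x y : A) :
    lP x * (rP y + rS y) = -(lS x * rS y) := by
  obtain ⟨-, -, -, -, -, -, -, h8, -, -, -, -⟩ := hrep x y
  rw [h8, neg_neg, add_comm]

theorem rP_add_rS_commute_lP_add_lS (hrep : IsAdRep s p lS rS lP rP) (x y : A) :
    (rP y + rS y) * (lP x + lS x) = (lP x + lS x) * (rP y + rS y) := by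
  obtain ⟨-, -, -, -, -, -, h7, -, h9, -, -, h12⟩ := hrep x y
  calc (rP y + rS y) * (lP x + lS x) = rP y * lP x + rP y * lS x + rS y * (lS x + lP x) := by
        noncomm_ring
    _ = lS x * rP y := by rw [← h9, h12, ← neg_eq_iff_eq_neg.mpr h7]; abel
    _ = (lP x + lS x) * (rP y + rS y) := by
        rw [add_mul, hrep.lP_mul_rP_add_rS, mul_add]; abel

end IsAdRep

theorem stmt3_general (s p : A →ₗ[K] A →ₗ[K] A)
    (lS rS lP rP : A →ₗ[K] Module.End K V)
    (hrep : IsAdRep s p lS rS lP rP) :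
    IsAdRep s p (starRep (-(rP + rS))) (starRep lP) (starRep rS)
      (starRep (-(lP + lS))) := by
  intro x y
  obtain ⟨h1, h2, h3, h4, h5, -, -, -, -, h10, h11, -⟩ := hrep x y
  obtain ⟨-, -, -, -, -, -, h7', -, h9', -, -, -⟩ := hrep y x
  have hrr := hrep.rP_add_rS_mul_rP_add_rS x y
  have hlr := hrep.lP_mul_rP_add_rS y x
  refine ⟨?_, ?_, ?_, ?_, ?_, ?_, ?_, ?_, ?_, ?_, ?_, ?_⟩ <;>
    simp only [starRep_apply, Module.Dual.transpose_mul_transpose, LinearMap.neg_apply,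
      LinearMap.add_apply, ← map_neg (Module.Dual.transpose (R := K) (M := V) (M' := V)),
      ← map_add] <;>
    congr 1
  · rw [neg_mul_neg, hrr, neg_neg, map_add rS, h5]; abel
  · rw [neg_mul_neg, hrr, ← h11]; noncomm_ring
  · rw [neg_mul_neg, hrr]
  · rw [h10]; noncomm_ring
  · rw [neg_neg, ← neg_eq_iff_eq_neg.mpr h1, map_add, ← h3]; abel
  · rw [neg_mul_neg, hrep.lP_add_lS_mul_lP_add_lS]
  · rw [mul_neg, hlr, h9']; noncomm_ring
  · rw [mul_neg, hlr]; noncomm_ring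
  · rw [mul_neg, hlr, h7']; noncomm_ring
  · rw [h4]; noncomm_ring
  · rw [← h3, h2]; noncomm_ring
  · rw [neg_mul_neg, neg_mul_neg, hrep.rP_add_rS_commute_lP_add_lS y x]

/-- the dual representation
`(V*, -(r_≺* + r_≻*), l_≺*, r_≻*, -(l_≺* + l_≻*))` of an anti-dendriform algebra. -/
theorem stmt3 (s p : A →ₗ[K] A →ₗ[K] A) (h : IsAntiDend s p)
    (lS rS lP rP : A →ₗ[K] Module.End K V)
    (hrep : IsAdRep s p lS rS lP rP) :
    IsAdRep s p (starRep (-(rP + rS))) (starRep lP) (starRep rS)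
      (starRep (-(lP + lS))) :=
  stmt3_general s p lS rS lP rP hrep
end
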